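/- Let M, N be σ-finite measure spaces, 1 ≤ r̃ ≤ r ≤ ∞, and let A : L^{r̃}(M) → L^r(M) and B : L^{r̃}(N) → L^r(N) be bounded linear operators with norms C_A and C_B respectively. Then the tensor product operator A ⊗ B, acting on functions on M × N by applying A in the first variable and B in the second, is bounded from L^{r̃}(M × N) to L^r(M × N) with norm at most C_A · C_B. -/

import Mathlib

/-!
Put `g (x, y) = B (f (x, ·)) y`, so that `S f (·, y) = A (g (·, y))`. Computing the norms on
`M × N` iteratively, the bound for `A` (in `x`, for each `y`) and the bound for `B` (in `y`, for
each `x`) apply to the two mixed norms `L^r_y L^r̃_x` and `L^r̃_x L^r_y` of `g`, and these are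
compared by Minkowski's integral inequality, which needs exactly `r̃ ≤ r`.
-/

open MeasureTheory ENNReal Function
open scoped NNReal

theorem eLpNorm_ennreal_const_mul {α : Type*} [MeasurableSpace α] {μ : Measure α} (c : ℝ≥0∞)
    {f : α → ℝ≥0∞} (hf : AEMeasurable f μ) (p : ℝ≥0∞) :
    eLpNorm (fun x => c * f x) p μ = c * eLpNorm f p μ := by
  rcases eq_or_ne p 0 with rfl | hp0
  · simp
  rcases eq_or_ne p ∞ with rfl | hptop
  · simp [eLpNormEssSup, essSup_const_mul]
  lift p to ℝ≥0 using hptop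
  have hp : (p : ℝ) ≠ 0 := by exact_mod_cast hp0
  refine rpow_left_injective hp ?_
  simp only [mul_rpow_of_nonneg _ _ (NNReal.coe_nonneg p),
    eLpNorm_nnreal_pow_eq_lintegral (coe_ne_zero.1 hp0), enorm_eq_self]
  exact lintegral_const_mul'' _ (hf.pow_const _)

section

variable {M N : Type*} [MeasurableSpace M] [MeasurableSpace N] {μ : Measure M} {ν : Measure N}

theorem lintegral_rpow_le_of_le_lintegral [SFinite μ] [SFinite ν] {s t : ℝ}
    (hst : s.HolderConjugate t) {G : M → N → ℝ≥0∞} (hG : Measurable (uncurry G))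
    {Ψ : N → ℝ≥0∞} (hΨ : Measurable Ψ) (hΨG : ∀ y, Ψ y ≤ ∫⁻ x, G x y ∂μ)
    (hfin : ∫⁻ y, Ψ y ^ s ∂ν ≠ ∞) :
    (∫⁻ y, Ψ y ^ s ∂ν) ^ s⁻¹ ≤ ∫⁻ x, (∫⁻ y, G x y ^ s ∂ν) ^ s⁻¹ ∂μ := by
  set J := ∫⁻ y, Ψ y ^ s ∂ν
  set R := ∫⁻ x, (∫⁻ y, G x y ^ s ∂ν) ^ s⁻¹ ∂μ
  have hJt : J ^ t⁻¹ ≠ ∞ := rpow_ne_top_of_nonneg (inv_pos.2 hst.symm.pos).le hfin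
  -- Hölder against `Ψ ^ (s - 1)`; cancelling `J ^ t⁻¹` afterwards is why `J < ∞` is needed.
  have hJ : J ≤ J ^ t⁻¹ * R := calc
    J = ∫⁻ y, Ψ y ^ (s - 1) * Ψ y ∂ν := lintegral_congr fun y => by
        have h := ENNReal.rpow_add_of_nonneg (x := Ψ y) (s - 1) 1 (by linarith [hst.lt])
          zero_le_one
        rwa [sub_add_cancel, rpow_one] at h
    _ ≤ ∫⁻ y, ∫⁻ x, Ψ y ^ (s - 1) * G x y ∂μ ∂ν := lintegral_mono fun y => by
        rw [lintegral_const_mul _ hG.of_uncurry_right]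
        exact mul_le_mul_right (hΨG y) _
    _ = ∫⁻ x, ∫⁻ y, Ψ y ^ (s - 1) * G x y ∂ν ∂μ :=
        (lintegral_lintegral_swap (by fun_prop)).symm
    _ ≤ ∫⁻ x, J ^ t⁻¹ * (∫⁻ y, G x y ^ s ∂ν) ^ s⁻¹ ∂μ := lintegral_mono fun x => by
        have holder := ENNReal.lintegral_mul_le_Lp_mul_Lq ν hst.symm
          (hΨ.pow_const (s - 1)).aemeasurable (hG.of_uncurry_left (x := x)).aemeasurable
        simp only [← rpow_mul, hst.sub_one_mul_conj, one_div] at holder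
        exact holder
    _ = J ^ t⁻¹ * R := lintegral_const_mul' _ _ hJt
  rcases eq_or_ne J 0 with hJ0 | hJ0
  · simp [hJ0, hst.pos]
  have hJt0 : J ^ t⁻¹ ≠ 0 := (rpow_pos (pos_iff_ne_zero.2 hJ0) hfin).ne'
  rwa [← ENNReal.mul_le_mul_iff_left hJt0 hJt, ← rpow_add _ _ hJ0 hfin, hst.inv_add_inv_eq_one,
    rpow_one, mul_comm]

theorem lintegral_rpow_lintegral_le_of_isFiniteMeasure [SFinite μ] [IsFiniteMeasure ν] {s : ℝ}
    (hs : 1 < s) {G : M → N → ℝ≥0∞} (hG : Measurable (uncurry G)) :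
    (∫⁻ y, (∫⁻ x, G x y ∂μ) ^ s ∂ν) ^ s⁻¹ ≤ ∫⁻ x, (∫⁻ y, G x y ^ s ∂ν) ^ s⁻¹ ∂μ := by
  have hs0 : 0 < s := zero_lt_one.trans hs
  set Φ : N → ℝ≥0∞ := fun y => ∫⁻ x, G x y ∂μ
  have hΦ : Measurable Φ := hG.lintegral_prod_left
  have htrunc : ∫⁻ y, Φ y ^ s ∂ν = ⨆ m : ℕ, ∫⁻ y, min (Φ y) m ^ s ∂ν := by
    rw [← lintegral_iSup (fun m => (hΦ.min measurable_const).pow_const s)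
      fun i j hij y => rpow_le_rpow (min_le_min_left _ (Nat.mono_cast hij)) hs0.le]
    congr with y
    calc Φ y ^ s = (⨆ m : ℕ, min (Φ y) m) ^ s := by
          rw [← inf_iSup_eq, iSup_natCast, inf_top_eq]
      _ = ⨆ m : ℕ, min (Φ y) m ^ s := (orderIsoRpow s hs0).map_iSup _
  rw [htrunc, rpow_inv_le_iff hs0, iSup_le_iff]
  intro m
  rw [← rpow_inv_le_iff hs0]
  refine lintegral_rpow_le_of_le_lintegral (.conjExponent hs) hG
    (hΦ.min measurable_const) (fun y => min_le_left _ _) ?_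
  refine ((lintegral_mono fun y => rpow_le_rpow (min_le_right _ _) hs0.le).trans_lt ?_).ne
  rw [lintegral_const]
  exact mul_lt_top (rpow_lt_top_of_nonneg hs0.le (natCast_ne_top m)) (measure_lt_top ν _)

theorem lintegral_rpow_lintegral_le [SFinite μ] [SFinite ν] {s : ℝ} (hs : 1 ≤ s)
    {G : M → N → ℝ≥0∞} (hG : Measurable (uncurry G)) :
    (∫⁻ y, (∫⁻ x, G x y ∂μ) ^ s ∂ν) ^ s⁻¹ ≤ ∫⁻ x, (∫⁻ y, G x y ^ s ∂ν) ^ s⁻¹ ∂μ := by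
  rcases hs.eq_or_lt with rfl | hs
  · simpa using (lintegral_lintegral_swap hG.aemeasurable).ge
  have hs0 : 0 < s := zero_lt_one.trans hs
  set κ : ℕ → Measure N := fun n => ∑ k ∈ Finset.range n, sfiniteSeq ν k
  have hκ : ∀ F : N → ℝ≥0∞, ∫⁻ y, F y ∂ν = ⨆ n, ∫⁻ y, F y ∂κ n := fun F => by
    conv_lhs => rw [← sum_sfiniteSeq ν]
    simp [κ, lintegral_sum_measure, ENNReal.tsum_eq_iSup_nat, lintegral_finsetSum_measure]
  rw [hκ, rpow_inv_le_iff hs0, iSup_le_iff]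
  intro n
  rw [← rpow_inv_le_iff hs0]
  refine (lintegral_rpow_lintegral_le_of_isFiniteMeasure hs hG).trans
    (lintegral_mono fun x => rpow_le_rpow ?_ (inv_nonneg.2 hs0.le))
  rw [hκ]
  exact le_iSup (fun n => ∫⁻ y, G x y ^ s ∂κ n) n

variable {ε : Type*} [TopologicalSpace ε] [ContinuousENorm ε] [MeasurableSpace ε]
  [OpensMeasurableSpace ε]

theorem Measurable.eLpNorm_prod_right [SFinite ν] {f : M × N → ε} (hf : Measurable f)
    (p : ℝ≥0∞) : Measurable fun x => eLpNorm (fun y => f (x, y)) p ν := by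
  rcases eq_or_ne p 0 with rfl | hp0
  · simp
  rcases eq_or_ne p ∞ with rfl | hptop
  · simp only [eLpNorm_exponent_top, eLpNormEssSup]
    refine measurable_of_Iic fun c => ?_
    have hset : (fun x => essSup (fun y => ‖f (x, y)‖ₑ) ν) ⁻¹' Set.Iic c =
        (fun x => ν (Prod.mk x ⁻¹' {z | c < ‖f z‖ₑ})) ⁻¹' {0} := by
      ext x
      simp only [Set.mem_preimage, Set.mem_Iic, Set.mem_singleton_iff, Set.preimage_ofPred_eq,
        ← not_le, ← ae_iff]
      exact ⟨fun h => (ENNReal.ae_le_essSup _).mono fun y hy => hy.trans h,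
        fun h => essSup_le_of_ae_le c h⟩
    rw [hset]
    exact measurable_measure_prodMk_left (measurableSet_lt measurable_const hf.enorm)
      (measurableSet_singleton 0)
  simp only [eLpNorm_eq_lintegral_rpow_enorm_toReal hp0 hptop]
  exact (hf.enorm.pow_const _).lintegral_prod_right'.pow_const _

theorem eLpNorm_prod [SFinite μ] [SFinite ν] {f : M × N → ε} (hf : Measurable f) (p : ℝ≥0∞) :
    eLpNorm f p (μ.prod ν) = eLpNorm (fun x => eLpNorm (fun y => f (x, y)) p ν) p μ := by
  rcases eq_or_ne p 0 with rfl | hp0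
  · simp
  rcases eq_or_ne p ∞ with rfl | hptop
  · refine le_antisymm ?_ ?_
    · refine eLpNormEssSup_le_of_ae_enorm_bound
        ((Measure.ae_prod_iff_ae_ae (measurableSet_le hf.enorm measurable_const)).2 ?_)
      filter_upwards [ae_le_eLpNormEssSup (f := fun x => eLpNorm (fun y => f (x, y)) ∞ ν)
        (μ := μ)] with x hx
      filter_upwards [ae_le_eLpNormEssSup (f := fun y => f (x, y)) (μ := ν)] with y hy
      exact hy.trans (by simpa using hx)
    · refine eLpNormEssSup_le_of_ae_enorm_bound ?_
      filter_upwards [Measure.ae_ae_of_ae_prod (ae_le_eLpNormEssSup (f := f) (μ := μ.prod ν))]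
        with x hx
      simpa using eLpNormEssSup_le_of_ae_enorm_bound hx
  lift p to ℝ≥0 using hptop
  have hp : (p : ℝ) ≠ 0 := by exact_mod_cast hp0
  refine rpow_left_injective hp ?_
  simp only [eLpNorm_nnreal_pow_eq_lintegral (coe_ne_zero.1 hp0), enorm_eq_self]
  exact lintegral_prod _ (hf.enorm.pow_const _).aemeasurable

theorem eLpNorm_prod_symm [SFinite μ] [SFinite ν] {f : M × N → ε} (hf : Measurable f)
    (p : ℝ≥0∞) :
    eLpNorm f p (μ.prod ν) = eLpNorm (fun y => eLpNorm (fun x => f (x, y)) p μ) p ν := by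
  rw [← Measure.prod_swap]
  exact MeasurableEquiv.prodComm.measurableEmbedding.eLpNorm_map_measure.trans
    (eLpNorm_prod (hf.comp measurable_swap) p)

theorem eLpNorm_eLpNorm_symm_le [SFinite μ] [SFinite ν] {f : M × N → ε} (hf : Measurable f)
    {p q : ℝ≥0∞} (hpq : p ≤ q) :
    eLpNorm (fun y => eLpNorm (fun x => f (x, y)) p μ) q ν ≤
      eLpNorm (fun x => eLpNorm (fun y => f (x, y)) q ν) p μ := by
  rcases eq_or_ne p 0 with rfl | hp0
  · simp
  rcases eq_or_ne q ∞ with rfl | hqtop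
  · have hmeas : MeasurableSet {z : M × N | ‖f z‖ₑ ≤ eLpNorm (fun y => f (z.1, y)) ∞ ν} :=
      measurableSet_le hf.enorm ((hf.eLpNorm_prod_right ∞).comp measurable_fst)
    have hle : ∀ᵐ y ∂ν, ∀ᵐ x ∂μ, ‖f (x, y)‖ₑ ≤ eLpNorm (fun y => f (x, y)) ∞ ν := by
      refine (Measure.ae_ae_comm hmeas).1 (Filter.Eventually.of_forall fun x => ?_)
      simpa using ae_le_eLpNormEssSup (f := fun y => f (x, y)) (μ := ν)
    refine eLpNormEssSup_le_of_ae_enorm_bound ?_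
    filter_upwards [hle] with y hy
    simpa using eLpNorm_mono_enorm_ae hy
  lift p to ℝ≥0 using ne_top_of_le_ne_top hqtop hpq
  lift q to ℝ≥0 using hqtop
  have hp0' : p ≠ 0 := by exact_mod_cast hp0
  have hq0' : q ≠ 0 := ne_bot_of_le_ne_bot hp0' (by exact_mod_cast hpq)
  have hp : (0 : ℝ) < p := NNReal.coe_pos.2 (pos_iff_ne_zero.2 hp0')
  have hminkowski := lintegral_rpow_lintegral_le (μ := μ) (ν := ν) (s := q / p)
    ((one_le_div hp).2 (by exact_mod_cast hpq)) (G := fun x y => ‖f (x, y)‖ₑ ^ (p : ℝ))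
    (hf.enorm.pow_const _)
  rw [← rpow_le_rpow_iff hp]
  convert hminkowski using 1
  · simp only [eLpNorm_nnreal_eq_lintegral hp0', eLpNorm_nnreal_eq_lintegral hq0',
      enorm_eq_self, ← rpow_mul]
    rw [one_div_mul_eq_div, one_div_mul_eq_div, inv_div]
  · simp only [eLpNorm_nnreal_pow_eq_lintegral hp0', eLpNorm_nnreal_eq_lintegral hq0',
      enorm_eq_self, ← rpow_mul]
    rw [mul_div_cancel₀ _ hp.ne', one_div_mul_eq_div, inv_div]

end

theorem tensor_product_bounded_general
    {M N : Type*} [MeasurableSpace M] [MeasurableSpace N]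
    (μ : Measure M) (ν : Measure N) [SFinite μ] [SFinite ν]
    (rt r : ℝ≥0∞) (hrr : rt ≤ r)
    (A : (M → ℂ) → (M → ℂ)) (B : (N → ℂ) → (N → ℂ))
    (CA CB : ℝ≥0∞)
    (hA : ∀ φ : M → ℂ, eLpNorm (A φ) r μ ≤ CA * eLpNorm φ rt μ)
    (hB : ∀ ψ : N → ℂ, eLpNorm (B ψ) r ν ≤ CB * eLpNorm ψ rt ν)
    (S : (M × N → ℂ) → (M × N → ℂ))
    (hS : ∀ (f : M × N → ℂ) (x : M) (y : N),
      S f (x, y) = A (fun x' => B (fun y' => f (x', y')) y) x)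
    (f : M × N → ℂ) (hf : Measurable f)
    (hSf : Measurable (S f))
    (hBf : Measurable fun p : M × N => B (fun y' => f (p.1, y')) p.2) :
    eLpNorm (S f) r (μ.prod ν) ≤ CA * CB * eLpNorm f rt (μ.prod ν) := by
  set g : M × N → ℂ := fun p => B (fun y' => f (p.1, y')) p.2
  have hSg : ∀ y, (fun x => S f (x, y)) = A fun x => g (x, y) :=
    fun y => funext fun x => hS f x y
  calc eLpNorm (S f) r (μ.prod ν)
      = eLpNorm (fun y => eLpNorm (fun x => S f (x, y)) r μ) r ν := eLpNorm_prod_symm hSf r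
    _ ≤ eLpNorm (fun y => CA * eLpNorm (fun x => g (x, y)) rt μ) r ν :=
        eLpNorm_mono_enorm fun y => by simpa only [enorm_eq_self, hSg] using hA _
    _ = CA * eLpNorm (fun y => eLpNorm (fun x => g (x, y)) rt μ) r ν :=
        eLpNorm_ennreal_const_mul _
          ((hBf.comp measurable_swap).eLpNorm_prod_right rt).aemeasurable _
    _ ≤ CA * eLpNorm (fun x => eLpNorm (fun y => g (x, y)) r ν) rt μ := by
        gcongr
        exact eLpNorm_eLpNorm_symm_le hBf hrr
    _ ≤ CA * eLpNorm (fun x => CB * eLpNorm (fun y => f (x, y)) rt ν) rt μ := by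
        gcongr
        exact eLpNorm_mono_enorm fun x => by
          simpa only [enorm_eq_self] using hB fun y => f (x, y)
    _ = CA * CB * eLpNorm f rt (μ.prod ν) := by
        rw [eLpNorm_ennreal_const_mul _ (hf.eLpNorm_prod_right rt).aemeasurable,
          ← eLpNorm_prod hf, mul_assoc]

/-- Tensor product of bounded operators: if `A : L^{r̃}(M) → L^r(M)` has norm `≤ C_A`
and `B : L^{r̃}(N) → L^r(N)` has norm `≤ C_B`, with `1 ≤ r̃ ≤ r ≤ ∞`, then the operator
`A ⊗ B` (apply `B` in the `y` variable, then `A` in the `x` variable) is bounded from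
`L^{r̃}(M × N)` to `L^r(M × N)` with norm at most `C_A · C_B`. -/
theorem tensor_product_bounded
    {M N : Type*} [MeasurableSpace M] [MeasurableSpace N]
    (μ : Measure M) (ν : Measure N) [SFinite μ] [SFinite ν]
    (rt r : ℝ≥0∞) (h1 : 1 ≤ rt) (hrr : rt ≤ r)
    (A : (M → ℂ) → (M → ℂ)) (B : (N → ℂ) → (N → ℂ))
    (CA CB : ℝ≥0∞)
    (hA : ∀ φ : M → ℂ, eLpNorm (A φ) r μ ≤ CA * eLpNorm φ rt μ)
    (hB : ∀ ψ : N → ℂ, eLpNorm (B ψ) r ν ≤ CB * eLpNorm ψ rt ν)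
    (S : (M × N → ℂ) → (M × N → ℂ))
    (hS : ∀ (f : M × N → ℂ) (x : M) (y : N),
      S f (x, y) = A (fun x' => B (fun y' => f (x', y')) y) x)
    (f : M × N → ℂ) (hf : Measurable f)
    (hSf : Measurable (S f))
    (hBf : Measurable fun p : M × N => B (fun y' => f (p.1, y')) p.2) :
    eLpNorm (S f) r (μ.prod ν) ≤ CA * CB * eLpNorm f rt (μ.prod ν) :=
  tensor_product_bounded_general μ ν rt r hrr A B CA CB hA hB S hS f hf hSf hBf
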